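/- Let G(E) be a graph inverse semigroup endowed with a Hausdorff topology τ making its multiplication jointly continuous and such that the set E(G(E)) of idempotents of G(E) is compact. Then for every Hausdorff topological semigroup S containing G(E) as a subsemigroup whose subspace topology is τ, the set G(E) is closed in S. -/

import Mathlib

/-! Preamble: graph inverse semigroups and compactness-type properties. -/

namespace GISPaper

variable {V E : Type*}

/-- `IsPathFrom src rng v l` means that the list of edges `l` is composable
and starts at the vertex `v`. -/
def IsPathFrom (src rng : E → V) : V → List E → Prop
  | _, [] => True
  | v, e :: l => src e = v ∧ IsPathFrom src rng (rng e) l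

/-- The end vertex of a list of edges starting at the vertex `v`. -/
def pathEnd (rng : E → V) : V → List E → V
  | v, [] => v
  | _, e :: l => pathEnd rng (rng e) l

theorem pathEnd_append (rng : E → V) (v : V) (l₁ l₂ : List E) :
    pathEnd rng v (l₁ ++ l₂) = pathEnd rng (pathEnd rng v l₁) l₂ := by
  induction l₁ generalizing v with
  | nil => rfl
  | cons e l ih => simpa [pathEnd] using ih (rng e)

theorem isPathFrom_append (src rng : E → V) (v : V) (l₁ l₂ : List E) :
    IsPathFrom src rng v (l₁ ++ l₂) ↔
      IsPathFrom src rng v l₁ ∧ IsPathFrom src rng (pathEnd rng v l₁) l₂ := by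
  induction l₁ generalizing v with
  | nil => simp [IsPathFrom, pathEnd]
  | cons e l ih => simp [IsPathFrom, pathEnd, ih (rng e), and_assoc]

/-- A (directed) path in the graph `(V, E, src, rng)`: a starting vertex together
with a composable list of edges (a path of length zero is just a vertex). -/
structure GPath (src rng : E → V) where
  start : V
  edges : List E
  isPath : IsPathFrom src rng start edges

/-- The range (end vertex) of a path. -/
def GPath.range {src rng : E → V} (p : GPath src rng) : V :=
  pathEnd rng p.start p.edges

/-- The nonzero elements of the graph inverse semigroup: pairs `u v⁻¹` of paths
with `r u = r v`. -/
def GISElem (src rng : E → V) : Type _ :=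
  {p : GPath src rng × GPath src rng // p.1.range = p.2.range}

/-- The graph inverse semigroup over the graph `(V, E, src, rng)`: the nonzero
elements `u v⁻¹` together with a zero element (represented by `none`). -/
def GIS (src rng : E → V) : Type _ := Option (GISElem src rng)

instance {src rng : E → V} : Zero (GIS src rng) :=
  ⟨(none : Option (GISElem src rng))⟩

open Classical in
/-- The multiplication of a graph inverse semigroup:
`u₁v₁⁻¹ · u₂v₂⁻¹ = u₁w v₂⁻¹` if `u₂ = v₁ w`, `u₁v₁⁻¹ · u₂v₂⁻¹ = u₁ (v₂ w)⁻¹` if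
`v₁ = u₂ w`, and `0` otherwise; `0` is absorbing. -/
noncomputable def GIS.mul {src rng : E → V} :
    Option (GISElem src rng) → Option (GISElem src rng) → Option (GISElem src rng)
  | some ⟨(u₁, v₁), h₁⟩, some ⟨(u₂, v₂), h₂⟩ =>
    if h : v₁.start = u₂.start ∧ v₁.edges <+: u₂.edges then
      some ⟨(⟨u₁.start, u₁.edges ++ u₂.edges.drop v₁.edges.length, by
        obtain ⟨hs, t, ht⟩ := h
        have hdrop : u₂.edges.drop v₁.edges.length = t := by
          rw [← ht, List.drop_left]
        have hu₂ := u₂.isPath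
        rw [← ht, isPathFrom_append] at hu₂
        rw [hdrop, isPathFrom_append]
        refine ⟨u₁.isPath, ?_⟩
        have he : pathEnd rng u₁.start u₁.edges = pathEnd rng u₂.start v₁.edges := by
          rw [← hs]; exact h₁
        rw [he]; exact hu₂.2⟩, v₂), by
        show pathEnd rng u₁.start (u₁.edges ++ u₂.edges.drop v₁.edges.length) = v₂.range
        obtain ⟨hs, t, ht⟩ := h
        have hdrop : u₂.edges.drop v₁.edges.length = t := by
          rw [← ht, List.drop_left]
        rw [hdrop, pathEnd_append]
        have he : pathEnd rng u₁.start u₁.edges = pathEnd rng u₂.start v₁.edges := by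
          rw [← hs]; exact h₁
        rw [he, ← pathEnd_append, ht]
        exact h₂⟩
    else if h' : u₂.start = v₁.start ∧ u₂.edges <+: v₁.edges then
      some ⟨(u₁, ⟨v₂.start, v₂.edges ++ v₁.edges.drop u₂.edges.length, by
        obtain ⟨hs, t, ht⟩ := h'
        have hdrop : v₁.edges.drop u₂.edges.length = t := by
          rw [← ht, List.drop_left]
        have hv₁ := v₁.isPath
        rw [← ht, isPathFrom_append] at hv₁
        rw [hdrop, isPathFrom_append]
        refine ⟨v₂.isPath, ?_⟩
        have he : pathEnd rng v₂.start v₂.edges = pathEnd rng v₁.start u₂.edges := by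
          rw [← hs]; exact h₂.symm
        rw [he]; exact hv₁.2⟩), by
        show u₁.range = pathEnd rng v₂.start (v₂.edges ++ v₁.edges.drop u₂.edges.length)
        obtain ⟨hs, t, ht⟩ := h'
        have hdrop : v₁.edges.drop u₂.edges.length = t := by
          rw [← ht, List.drop_left]
        have he : pathEnd rng v₂.start v₂.edges = pathEnd rng v₁.start u₂.edges := by
          rw [← hs]; exact h₂.symm
        rw [hdrop, pathEnd_append, he, ← pathEnd_append, ht]
        exact h₁⟩
    else none
  | _, _ => none

noncomputable instance {src rng : E → V} : Mul (GIS src rng) := ⟨GIS.mul⟩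

theorem GIS.zero_mul {src rng : E → V} (x : GIS src rng) : 0 * x = 0 := rfl

/-- The topology in which every nonzero point is isolated and the open
neighbourhoods of `0` are exactly the cofinite sets containing `0`. -/
def tauC (α : Type*) [Zero α] : TopologicalSpace α where
  IsOpen U := (0 : α) ∈ U → Uᶜ.Finite
  isOpen_univ := by simp
  isOpen_inter U W hU hW h := by
    rw [Set.compl_inter]
    exact (hU h.1).union (hW h.2)
  isOpen_sUnion 𝒮 h h0 := by
    obtain ⟨U, hU, hU0⟩ := h0
    exact (h U hU hU0).subset (Set.compl_subset_compl.mpr (Set.subset_sUnion_of_mem hU))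

/-- A topological space is CLP-compact if every cover by clopen sets has a
finite subcover. -/
def CLPCompact (X : Type*) [TopologicalSpace X] : Prop :=
  ∀ 𝒰 : Set (Set X), (∀ U ∈ 𝒰, IsClopen U) → ⋃₀ 𝒰 = Set.univ →
    ∃ ℱ ⊆ 𝒰, ℱ.Finite ∧ ⋃₀ ℱ = Set.univ

/-- A topological space is countably compact if every infinite subset has an
accumulation point. -/
def CountablyCompactSpace (X : Type*) [TopologicalSpace X] : Prop :=
  ∀ B : Set X, B.Infinite → ∃ x : X, AccPt x (Filter.principal B)

/-- A topological space is feebly compact if every locally finite family of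
nonempty open sets is finite. -/
def FeeblyCompact (X : Type*) [TopologicalSpace X] : Prop :=
  ∀ 𝒰 : Set (Set X), (∀ U ∈ 𝒰, IsOpen U ∧ U.Nonempty) →
    (∀ x : X, ∃ N ∈ nhds x, {U ∈ 𝒰 | (U ∩ N).Nonempty}.Finite) → 𝒰.Finite

/-- The multiplication of the bicyclic monoid on `ℕ × ℕ`. -/
def bicyclicMul (x y : ℕ × ℕ) : ℕ × ℕ :=
  (x.1 + y.1 - min x.2 y.1, x.2 + y.2 - min x.2 y.1)

/-- The multiplication of the semigroup of `X × X`-matrix units (with zero `none`). -/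
def matUnitsMul {X : Type*} [DecidableEq X] :
    Option (X × X) → Option (X × X) → Option (X × X)
  | some (a, b), some (c, d) => if b = c then some (a, d) else none
  | _, _ => none

/-- A cycle based at the vertex `e`: a path of nonzero length from `e` to `e`. -/
def HasCycleAt (src rng : E → V) (e : V) : Prop :=
  ∃ p : GPath src rng, p.edges ≠ [] ∧ p.start = e ∧ p.range = e

end GISPaper

/-!
Let `x` be the limit in `S` of `ι (u v⁻¹)` along an ultrafilter of nonzero elements `u v⁻¹`.
A set of pairwise orthogonal idempotents containing `0` is closed, so the sets
`{0} ∪ {p p⁻¹ : |p| = n}` are compact; using them one shows that along any ultrafilter of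
paths `p`, either `p p⁻¹ → 0` or `p` is eventually constant. If `u u⁻¹ → 0`, passing to
the limit in `(u u⁻¹)(u v⁻¹) = u v⁻¹` and `0 (u v⁻¹) = 0` gives `ι 0 * x = x` and
`ι 0 * x = ι 0`, so `x = ι 0`; symmetrically on the right with `v v⁻¹`. Otherwise `u` and `v`
are eventually constant and `x = ι (u v⁻¹)`.
-/

section Topology

open Filter Topology

variable {X α : Type*} [TopologicalSpace X]

theorem IsCompact.exists_tendsto_ultrafilter {s : Set X} (hs : IsCompact s)
    (𝒰 : Ultrafilter α) {f : α → X} (hf : ∀ᶠ a in 𝒰, f a ∈ s) :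
    ∃ x ∈ s, Tendsto f 𝒰 (𝓝 x) :=
  hs.ultrafilter_le_nhds' (𝒰.map f) hf

theorem exists_ultrafilter_tendsto_of_mem_closure_range {f : α → X} {x : X}
    (hx : x ∈ closure (Set.range f)) : ∃ 𝒰 : Ultrafilter α, Tendsto f 𝒰 (𝓝 x) := by
  obtain ⟨u, hu, hux⟩ := mem_closure_iff_ultrafilter.1 hx
  rw [← Set.image_univ] at hu
  refine ⟨.ofComapInfPrincipal hu, ?_⟩
  rwa [Tendsto, ← Ultrafilter.coe_map, Ultrafilter.ofComapInfPrincipal_eq_of_map]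

theorem Ultrafilter.exists_eventually_eq_of_eventually_le (𝒰 : Ultrafilter α) {f : α → ℕ}
    {k : ℕ} (h : ∀ᶠ a in 𝒰, f a ≤ k) : ∃ n, ∀ᶠ a in 𝒰, f a = n := by
  obtain ⟨n, -, hn⟩ := Ultrafilter.eq_pure_of_finite_mem (Set.finite_Iic k) (f := 𝒰.map f) h
  exact ⟨n, show {n} ∈ 𝒰.map f from hn ▸ rfl⟩

theorem eq_of_tendsto_of_absorbing [T2Space X] {f : X × X → X} (hf : Continuous f)
    {l : Filter α} [l.NeBot] {a b : α → X} {z x : X} (ha : Tendsto a l (𝓝 z))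
    (hb : Tendsto b l (𝓝 x)) (hab : ∀ i, f (a i, b i) = b i) (hz : ∀ i, f (z, b i) = z) :
    x = z := by
  have hzx : f (z, x) = x :=
    tendsto_nhds_unique (((hf.tendsto _).comp (ha.prodMk_nhds hb)).congr hab) hb
  have hzx' : f (z, x) = z :=
    tendsto_nhds_unique (((hf.tendsto _).comp (tendsto_const_nhds.prodMk_nhds hb)).congr hz)
      tendsto_const_nhds
  exact hzx.symm.trans hzx'

theorem isClosed_of_pairwise_mul_eq_zero {M : Type*} [TopologicalSpace M] [T2Space M] [Mul M]
    [Zero M] [ContinuousMul M] {A : Set M} (h0 : 0 ∈ A) (hidem : A ⊆ {x | x * x = x})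
    (horth : A.Pairwise fun a b => a * b = 0) : IsClosed A := by
  refine isClosed_of_closure_subset fun d hd => ?_
  by_contra hdA
  have hdd : d * d = d :=
    closure_minimal hidem (isClosed_eq (continuous_id.mul continuous_id) continuous_id) hd
  have hne : ∀ᶠ p : M × M in 𝓝 d ×ˢ 𝓝 d, p.1 * p.2 ≠ 0 := by
    rw [← nhds_prod_eq]
    refine (continuous_mul.tendsto (d, d)).eventually (isOpen_compl_singleton.mem_nhds ?_)
    rintro (h : d * d = 0)
    exact hdA (hdd ▸ h ▸ h0)
  obtain ⟨t, ht, htt⟩ :=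
    (Filter.eventually_prod_self_iff (r := fun x y : M => x * y ≠ 0)).1 hne
  obtain ⟨e₁, he₁t, he₁A⟩ := mem_closure_iff_nhds.1 hd t ht
  obtain ⟨e₂, ⟨he₂t, he₂e₁⟩, he₂A⟩ :=
    mem_closure_iff_nhds.1 hd _ (inter_mem ht (isOpen_compl_singleton.mem_nhds
      fun h : d = e₁ => hdA (h ▸ he₁A)))
  exact htt e₁ he₁t e₂ he₂t (horth he₁A he₂A (Ne.symm he₂e₁))

end Topology

namespace GISPaper

open Filter Topology

variable {V E : Type*} {src rng : E → V}

namespace GPath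

theorem ext {P Q : GPath src rng} (hs : P.start = Q.start) (he : P.edges = Q.edges) : P = Q := by
  cases P; cases Q; cases hs; cases he; rfl

-- Reducible, so that `simp` can use it to decide the conditions in `GIS.mul`.
abbrev IsPrefix (A P : GPath src rng) : Prop :=
  A.start = P.start ∧ A.edges <+: P.edges

theorem IsPrefix.refl (P : GPath src rng) : P.IsPrefix P :=
  ⟨rfl, List.prefix_refl _⟩

theorem IsPrefix.length_le {A P : GPath src rng} (h : A.IsPrefix P) :
    A.edges.length ≤ P.edges.length :=
  h.2.length_le

theorem IsPrefix.eq_of_length_le {A P : GPath src rng} (h : A.IsPrefix P)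
    (hl : P.edges.length ≤ A.edges.length) : A = P :=
  ext h.1 (h.2.eq_of_length_le hl)

def take (P : GPath src rng) (n : ℕ) : GPath src rng where
  start := P.start
  edges := P.edges.take n
  isPath := by
    have h := P.isPath
    rw [← List.take_append_drop n P.edges, isPathFrom_append] at h
    exact h.1

theorem take_isPrefix (P : GPath src rng) (n : ℕ) : (P.take n).IsPrefix P :=
  ⟨rfl, List.take_prefix n P.edges⟩

theorem length_take {P : GPath src rng} {n : ℕ} (h : n ≤ P.edges.length) :
    (P.take n).edges.length = n :=
  List.length_take_of_le h

end GPath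

namespace GIS

/-- The element `P Q⁻¹`. -/
def mk (P Q : GPath src rng) (h : P.range = Q.range) : GIS src rng :=
  some ⟨(P, Q), h⟩

/-- The idempotent `P P⁻¹`. -/
def idem (P : GPath src rng) : GIS src rng :=
  mk P P rfl

theorem idem_ne_zero (P : GPath src rng) : idem P ≠ 0 :=
  Option.some_ne_none _

theorem idem_injective : Function.Injective (idem : GPath src rng → GIS src rng) :=
  fun _ _ h => congrArg (fun g : GISElem src rng => g.val.1) (Option.some.inj h)

theorem mul_zero (g : GIS src rng) : g * 0 = 0 := by
  rcases g with _ | ⟨⟨_, _⟩, _⟩ <;> rfl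

theorem idem_mul_mk_of_isPrefix {A P Q : GPath src rng} (hA : A.IsPrefix P)
    (h : P.range = Q.range) : idem A * mk P Q h = mk P Q h := by
  show GIS.mul _ _ = _
  simp only [idem, mk, GIS.mul, dif_pos hA]
  obtain ⟨t, ht⟩ := hA.2
  exact congrArg some (Subtype.ext (Prod.ext (GPath.ext hA.1 (by simp [← ht])) rfl))

theorem mk_mul_idem_of_isPrefix {A P Q : GPath src rng} (hA : A.IsPrefix Q)
    (h : P.range = Q.range) : mk P Q h * idem A = mk P Q h := by
  show GIS.mul _ _ = _
  by_cases hQA : Q.IsPrefix A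
  · obtain rfl := hA.eq_of_length_le hQA.length_le
    simp only [idem, mk, GIS.mul, dif_pos hQA]
    exact congrArg some (Subtype.ext (Prod.ext (GPath.ext rfl (by simp)) rfl))
  · simp only [idem, mk, GIS.mul, dif_neg hQA, dif_pos hA]
    obtain ⟨t, ht⟩ := hA.2
    exact congrArg some (Subtype.ext (Prod.ext rfl (GPath.ext hA.1 (by simp [← ht]))))

theorem idem_mul_idem_self (P : GPath src rng) : idem P * idem P = idem P :=
  idem_mul_mk_of_isPrefix (.refl P) rfl

theorem idem_mul_idem_of_not_isPrefix {A P : GPath src rng} (hAP : ¬A.IsPrefix P)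
    (hPA : ¬P.IsPrefix A) : idem A * idem P = 0 := by
  show GIS.mul _ _ = _
  simp only [idem, mk, GIS.mul, dif_neg hAP, dif_neg hPA]
  rfl

theorem isPrefix_of_idem_mul_idem_eq {A P : GPath src rng} (h : idem A * idem P = idem P) :
    A.IsPrefix P := by
  by_contra hAP
  by_cases hPA : P.IsPrefix A
  · rw [idem, mk_mul_idem_of_isPrefix hPA rfl] at h
    exact hAP (idem_injective h ▸ .refl A)
  · rw [idem_mul_idem_of_not_isPrefix hAP hPA] at h
    exact idem_ne_zero P h.symm

theorem eq_zero_or_eq_idem_of_mul_self {g : GIS src rng} (h : g * g = g) :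
    g = 0 ∨ ∃ P, g = idem P := by
  rcases g with _ | ⟨⟨P, Q⟩, hPQ⟩
  · exact .inl rfl
  refine .inr ⟨P, ?_⟩
  replace h : GIS.mul _ _ = _ := h
  simp only [GIS.mul] at h
  split_ifs at h with hQP hPQ'
  · have h' := congrArg (fun g : GISElem src rng => g.val.1.edges) (Option.some.inj h)
    simp only [List.append_right_eq_self, List.drop_eq_nil_iff] at h'
    obtain rfl := GPath.IsPrefix.eq_of_length_le hQP h'
    rfl
  · have h' := congrArg (fun g : GISElem src rng => g.val.2.edges) (Option.some.inj h)
    simp only [List.append_right_eq_self, List.drop_eq_nil_iff] at h'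
    obtain rfl := GPath.IsPrefix.eq_of_length_le hPQ' h'
    rfl

variable (src rng) in
def idemsOfLength (n : ℕ) : Set (GIS src rng) :=
  insert 0 (idem '' {P | P.edges.length = n})

theorem idemsOfLength_subset (n : ℕ) : idemsOfLength src rng n ⊆ {x | x * x = x} := by
  rintro _ (rfl | ⟨P, -, rfl⟩)
  · rfl
  · exact idem_mul_idem_self P

theorem mul_eq_zero_of_mem_idemsOfLength {n : ℕ} {a b : GIS src rng}
    (ha : a ∈ idemsOfLength src rng n) (hb : b ∈ idemsOfLength src rng n) (hab : a ≠ b) :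
    a * b = 0 := by
  rcases ha with rfl | ⟨P, hP, rfl⟩
  · rfl
  rcases hb with rfl | ⟨Q, hQ, rfl⟩
  · exact mul_zero _
  have hPQ : P ≠ Q := fun h => hab (h ▸ rfl)
  exact idem_mul_idem_of_not_isPrefix (fun h => hPQ (h.eq_of_length_le (hQ.trans hP.symm).le))
    (fun h => hPQ (h.eq_of_length_le (hP.trans hQ.symm).le).symm)

variable [TopologicalSpace (GIS src rng)] [T2Space (GIS src rng)] [ContinuousMul (GIS src rng)]

theorem isClosed_of_subset_idemsOfLength {n : ℕ} {A : Set (GIS src rng)}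
    (hA : A ⊆ idemsOfLength src rng n) (h0 : 0 ∈ A) : IsClosed A :=
  isClosed_of_pairwise_mul_eq_zero h0 (hA.trans (idemsOfLength_subset n))
    fun _ ha _ hb hab => mul_eq_zero_of_mem_idemsOfLength (hA ha) (hA hb) hab

variable (𝒰 : Ultrafilter (GPath src rng))

/-- The truncations of the `Q` at length `|P| + 1` converge to some `R R⁻¹` with `|R| = |P| + 1`,
or to `0`, and the limit would have to absorb `P P⁻¹` on the left. -/
theorem not_tendsto_idem_of_eventually_length_lt
    (hidem : IsCompact {x : GIS src rng | x * x = x}) (P : GPath src rng)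
    (hlen : ∀ᶠ (Q : GPath src rng) in 𝒰, P.edges.length < Q.edges.length) :
    ¬Tendsto (idem : GPath src rng → GIS src rng) 𝒰 (𝓝 (idem P)) := by
  intro hP
  set n := P.edges.length + 1
  have hcpt : IsCompact (idemsOfLength src rng n) :=
    hidem.of_isClosed_subset (isClosed_of_subset_idemsOfLength subset_rfl (.inl rfl))
      (idemsOfLength_subset n)
  obtain ⟨d, hd, hlim⟩ := hcpt.exists_tendsto_ultrafilter 𝒰 (f := fun Q => idem (Q.take n))
    (hlen.mono fun Q hQ => .inr ⟨Q.take n, GPath.length_take hQ, rfl⟩)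
  have hdP : d * idem P = idem P :=
    tendsto_nhds_unique ((hlim.mul hP).congr fun Q =>
      idem_mul_mk_of_isPrefix (Q.take_isPrefix n) rfl) hP
  rcases hd with rfl | ⟨R, hR, rfl⟩
  · exact idem_ne_zero P hdP.symm
  · have hRP := (isPrefix_of_idem_mul_idem_eq hdP).length_le
    have hR : R.edges.length = n := hR
    omega

theorem eventually_eq_of_tendsto_idem {P : GPath src rng} {n : ℕ}
    (hlen : ∀ᶠ (Q : GPath src rng) in 𝒰, Q.edges.length = n)
    (hP : Tendsto (idem : GPath src rng → GIS src rng) 𝒰 (𝓝 (idem P))) :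
    ∀ᶠ (Q : GPath src rng) in 𝒰, Q = P := by
  by_contra hne
  rw [← Ultrafilter.eventually_not] at hne
  have hclosed : IsClosed (idemsOfLength src rng n \ {idem P}) :=
    isClosed_of_subset_idemsOfLength Set.sdiff_subset ⟨.inl rfl, (idem_ne_zero P).symm⟩
  have hmem := hclosed.mem_of_tendsto hP ((hlen.and hne).mono fun Q hQ =>
    ⟨.inr ⟨Q, hQ.1, rfl⟩, fun h => hQ.2 (idem_injective h)⟩)
  exact hmem.2 rfl

theorem tendsto_idem_zero_or_eventually_eq (hidem : IsCompact {x : GIS src rng | x * x = x}) :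
    Tendsto (idem : GPath src rng → GIS src rng) 𝒰 (𝓝 0) ∨
      ∃ P, ∀ᶠ (Q : GPath src rng) in 𝒰, Q = P := by
  obtain ⟨d, hd, hlim⟩ := hidem.exists_tendsto_ultrafilter 𝒰
    (.of_forall fun P => idem_mul_idem_self P)
  rcases eq_zero_or_eq_idem_of_mul_self hd with rfl | ⟨P, rfl⟩
  · exact .inl hlim
  refine .inr ⟨P, ?_⟩
  by_cases hlong : ∀ᶠ (Q : GPath src rng) in 𝒰, P.edges.length < Q.edges.length
  · exact absurd hlim (not_tendsto_idem_of_eventually_length_lt 𝒰 hidem P hlong)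
  · rw [← Ultrafilter.eventually_not] at hlong
    obtain ⟨n, hn⟩ :=
      𝒰.exists_eventually_eq_of_eventually_le (hlong.mono fun Q => le_of_not_gt)
    exact eventually_eq_of_tendsto_idem 𝒰 hn hlim

end GIS

end GISPaper

open GISPaper in
theorem statement5_general {V E : Type*} (src rng : E → V)
    (τ : TopologicalSpace (GIS src rng)) (hT2 : @T2Space _ τ)
    (hcont : @Continuous _ _ (@instTopologicalSpaceProd _ _ τ τ) τ
      (fun p : GIS src rng × GIS src rng => p.1 * p.2))
    (hidem : @IsCompact _ τ {x : GIS src rng | x * x = x})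
    {S : Type*} [TopologicalSpace S] [T2Space S] [Mul S]
    (hSmul : Continuous (fun p : S × S => p.1 * p.2))
    (ι : GIS src rng → S)
    (hhom : ∀ x y : GIS src rng, ι (x * y) = ι x * ι y)
    (hind : @Topology.IsInducing _ _ τ _ ι) :
    IsClosed (Set.range ι) := by
  let _ := τ
  have : ContinuousMul (GIS src rng) := ⟨hcont⟩
  have hι : Continuous ι := hind.continuous
  refine isClosed_of_closure_subset fun x hx => ?_
  have hrange : Set.range ι = insert (ι 0) (Set.range fun g : GISElem src rng => ι (some g)) :=
    Option.range_eq ι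
  rw [hrange, Set.insert_eq, closure_union, closure_singleton] at hx
  rcases hx with rfl | hx
  · exact ⟨0, rfl⟩
  obtain ⟨𝒰, hx⟩ := exists_ultrafilter_tendsto_of_mem_closure_range hx
  rcases GIS.tendsto_idem_zero_or_eventually_eq (𝒰.map fun g => g.val.1) hidem with
    hu | ⟨P, hP⟩
  · have hu' := (hι.tendsto 0).comp (hu.comp Filter.tendsto_map)
    refine ⟨0, (eq_of_tendsto_of_absorbing hSmul hu' hx (fun g => ?_) (fun g => ?_)).symm⟩
    · exact (hhom _ _).symm.trans (congrArg ι (GIS.idem_mul_mk_of_isPrefix (.refl _) g.2))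
    · exact (hhom _ _).symm.trans (congrArg ι (GIS.zero_mul _))
  rcases GIS.tendsto_idem_zero_or_eventually_eq (𝒰.map fun g => g.val.2) hidem with
    hv | ⟨Q, hQ⟩
  · have hv' := (hι.tendsto 0).comp (hv.comp Filter.tendsto_map)
    refine ⟨0, (eq_of_tendsto_of_absorbing (hSmul.comp continuous_swap) hv' hx
      (fun g => ?_) (fun g => ?_)).symm⟩
    · exact (hhom _ _).symm.trans (congrArg ι (GIS.mk_mul_idem_of_isPrefix (.refl _) g.2))
    · exact (hhom _ _).symm.trans (congrArg ι (GIS.mul_zero _))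
  have hPQ : ∀ᶠ g in (𝒰 : Filter (GISElem src rng)), g.val.1 = P ∧ g.val.2 = Q :=
    (Filter.eventually_map.1 hP).and (Filter.eventually_map.1 hQ)
  obtain ⟨g, hg⟩ := hPQ.exists
  have hconst : ∀ᶠ h in (𝒰 : Filter (GISElem src rng)), h = g :=
    hPQ.mono fun h hh => Subtype.ext (Prod.ext (hh.1.trans hg.1.symm) (hh.2.trans hg.2.symm))
  have hg' : Filter.Tendsto (fun h : GISElem src rng => ι (some h)) 𝒰 (nhds (ι (some g))) :=
    tendsto_const_nhds.congr' (hconst.mono fun h hh => by rw [hh])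
  exact ⟨some g, tendsto_nhds_unique hg' hx⟩

open GISPaper in
/-- Let `G(E)` carry a Hausdorff topology `τ` with jointly continuous
multiplication such that the set of idempotents of `G(E)` is compact. Then for every
Hausdorff topological semigroup `S` containing `G(E)` as a subsemigroup whose subspace
topology is `τ`, the set `G(E)` is closed in `S`. -/
theorem statement5 {V E : Type*} (src rng : E → V)
    (τ : TopologicalSpace (GIS src rng)) (hT2 : @T2Space _ τ)
    (hcont : @Continuous _ _ (@instTopologicalSpaceProd _ _ τ τ) τ
      (fun p : GIS src rng × GIS src rng => p.1 * p.2))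
    (hidem : @IsCompact _ τ {x : GIS src rng | x * x = x})
    {S : Type*} [TopologicalSpace S] [T2Space S] [Mul S]
    (hassoc : ∀ a b c : S, a * b * c = a * (b * c))
    (hSmul : Continuous (fun p : S × S => p.1 * p.2))
    (ι : GIS src rng → S) (hinj : Function.Injective ι)
    (hhom : ∀ x y : GIS src rng, ι (x * y) = ι x * ι y)
    (hind : @Topology.IsInducing _ _ τ _ ι) :
    IsClosed (Set.range ι) :=
  statement5_general src rng τ hT2 hcont hidem hSmul ι hhom hind
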